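/- arXiv:2407.08560 — 2 statements merged into one kernel-verified Lean document; each statement's English description precedes it below -/
import Mathlib

section
/- Under the stated conditional average treatment effect setup, the average treatment effect admits the doubly robust (augmented inverse probability weighting) representation: E[Y(1) − Y(0)] = E[ μ⁰(1,S) + T·(Y − μ⁰(1,S))/π⁰(S) − μ⁰(0,S) − (1−T)·(Y − μ⁰(0,S))/(1 − π⁰(S)) ]. -/
/-!
Each arm of the doubly robust score has the mean of that arm's potential outcome, for every
bounded regression `ν` of `S`. Conditionally on `S` the arm indicator `A` has mean `e(S)`, its
propensity, so `E[A ν(S) / e(S)] = E[ν(S)]` by pulling out known factors. For the outcome `V`,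
conditional independence of `V` and `A` given `S` makes `E[1{V ∈ s} A | S] = E[1{V ∈ s} | S] e(S)`,
so `(A - e(S)) G(S)` integrates to zero over every set of `σ(V)`; testing against the
`σ(V)`-measurable function `V` itself gives `E[A V / e(S)] = E[e(S) V / e(S)] = E[V]`.
Subtracting the control arm (indicator `1 - T`, propensity `1 - π⁰`) from the treated arm gives
the representation.
-/

open MeasureTheory ProbabilityTheory

lemma norm_le_one_of_eq_zero_or_eq_one {a : ℝ} (h : a = 0 ∨ a = 1) : ‖a‖ ≤ 1 := by
  rcases h with rfl | rfl <;> simp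

lemma eq_indicator_preimage_one_of_eq_zero_or_eq_one {Ω : Type*} {A : Ω → ℝ}
    (hA : ∀ ω, A ω = 0 ∨ A ω = 1) : A = (A ⁻¹' {1}).indicator 1 := by
  funext ω
  rcases hA ω with h | h <;> simp [h]

namespace MeasureTheory

variable {Ω : Type*} {m mΩ : MeasurableSpace Ω} {μ : Measure Ω}

lemma ae_norm_inv_le_of_le {e : Ω → ℝ} {c : ℝ} (hc : 0 < c) (hec : ∀ᵐ ω ∂μ, c ≤ e ω) :
    ∀ᵐ ω ∂μ, ‖(e ω)⁻¹‖ ≤ c⁻¹ := by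
  filter_upwards [hec] with ω hω
  rw [norm_inv, Real.norm_of_nonneg (hc.le.trans hω)]
  exact inv_anti₀ hc hω

lemma integral_mul_indicator_one {s : Set Ω} (hs : MeasurableSet s) (f : Ω → ℝ) :
    ∫ ω, f ω * s.indicator 1 ω ∂μ = ∫ ω in s, f ω ∂μ := by
  rw [← integral_indicator hs]
  congr 1 with ω
  by_cases h : ω ∈ s <;> simp [h]

variable [IsFiniteMeasure μ]

lemma Integrable.of_eq_zero_or_eq_one {A : Ω → ℝ} (hA : Measurable A)
    (hA01 : ∀ ω, A ω = 0 ∨ A ω = 1) : Integrable A μ :=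
  .of_bound hA.aestronglyMeasurable 1 <|
    .of_forall fun ω => norm_le_one_of_eq_zero_or_eq_one (hA01 ω)

lemma integral_mul_condExp_of_bound (hm : m ≤ mΩ) {f g : Ω → ℝ} (hf : StronglyMeasurable[m] f)
    (hg : Integrable g μ) {c : ℝ} (hf_bound : ∀ᵐ ω ∂μ, ‖f ω‖ ≤ c) :
    ∫ ω, f ω * μ[g|m] ω ∂μ = ∫ ω, f ω * g ω ∂μ := by
  rw [← integral_condExp hm (f := fun ω => f ω * g ω)]
  exact integral_congr_ae (condExp_stronglyMeasurable_mul_of_bound hm hf hg c hf_bound).symm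

lemma integral_mul_eq_of_forall_setIntegral_eq (hm : m ≤ mΩ) {f g h : Ω → ℝ}
    (hf : Integrable f μ) (hg : Integrable g μ)
    (hfg : ∀ s, MeasurableSet[m] s → ∫ ω in s, f ω ∂μ = ∫ ω in s, g ω ∂μ)
    (hh : StronglyMeasurable[m] h) {c : ℝ} (hh_bound : ∀ᵐ ω ∂μ, ‖h ω‖ ≤ c) :
    ∫ ω, h ω * f ω ∂μ = ∫ ω, h ω * g ω ∂μ := by
  have hcond : μ[g|m] =ᵐ[μ] μ[f|m] :=
    ae_eq_condExp_of_forall_setIntegral_eq hm hf (fun _ _ _ => integrable_condExp.integrableOn)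
      (fun s hs _ => (setIntegral_condExp hm hg hs).trans (hfg s hs).symm)
      stronglyMeasurable_condExp.aestronglyMeasurable
  rw [← integral_mul_condExp_of_bound hm hh hf hh_bound,
    ← integral_mul_condExp_of_bound hm hh hg hh_bound]
  exact integral_congr_ae (hcond.symm.mono fun ω hω => congrArg (h ω * ·) hω)

lemma ae_eq_condExp_comap_of_forall_integral_mul_eq {β : Type*} [MeasurableSpace β]
    {S : Ω → β} (hS : Measurable S) {f : Ω → ℝ} {g : β → ℝ} (hf : Integrable f μ)
    (hg : Measurable g) (hgS : Integrable (fun ω => g (S ω)) μ)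
    (hfg : ∀ h : β → ℝ, Measurable h → (∃ C, ∀ x, |h x| ≤ C) →
      ∫ ω, f ω * h (S ω) ∂μ = ∫ ω, g (S ω) * h (S ω) ∂μ) :
    (fun ω => g (S ω)) =ᵐ[μ] μ[f|MeasurableSpace.comap S inferInstance] := by
  refine ae_eq_condExp_of_forall_setIntegral_eq hS.comap_le hf (fun _ _ _ => hgS.integrableOn)
    ?_ (hg.comp (comap_measurable S)).stronglyMeasurable.aestronglyMeasurable
  rintro _ ⟨B, hB, rfl⟩ -
  have hind : ∀ φ : Ω → ℝ, ∫ ω, φ ω * B.indicator 1 (S ω) ∂μ = ∫ ω in S ⁻¹' B, φ ω ∂μ :=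
    integral_mul_indicator_one (hS hB)
  rw [← hind, ← hind, hfg _ (measurable_one.indicator hB)
    ⟨1, fun x => by by_cases hx : x ∈ B <;> simp [hx]⟩]

lemma one_sub_ae_eq_condExp_one_sub (hm : m ≤ mΩ) {A e : Ω → ℝ} (hA : Integrable A μ)
    (heA : e =ᵐ[μ] μ[A|m]) : (fun ω => 1 - e ω) =ᵐ[μ] μ[fun ω => 1 - A ω|m] := by
  filter_upwards [heA, condExp_sub (integrable_const 1) hA m] with ω he hsub
  change _ = μ[(fun _ => (1 : ℝ)) - A|m] ω
  rw [hsub, Pi.sub_apply, condExp_const hm, he]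

end MeasureTheory

namespace ProbabilityTheory

/-- The augmented inverse-probability-weighted score of one treatment arm, with arm indicator
`A`, potential outcome `V`, propensity `e` and outcome regression `ν`. -/
noncomputable def aipwScore {Ω : Type*} (A V e ν : Ω → ℝ) (ω : Ω) : ℝ :=
  ν ω + A ω * (V ω - ν ω) / e ω

variable {Ω : Type*} {m mΩ : MeasurableSpace Ω} [StandardBorelSpace Ω] {μ : Measure Ω}
  [IsFiniteMeasure μ] {A V : Ω → ℝ}

lemma condExp_indicator_mul_of_condIndepFun (hm : m ≤ mΩ) (hV : Measurable V)
    (hA : Measurable A) (hA01 : ∀ ω, A ω = 0 ∨ A ω = 1) (hVA : CondIndepFun m hm V A μ)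
    {s : Set ℝ} (hs : MeasurableSet s) :
    μ[(V ⁻¹' s).indicator 1 * A|m] =ᵐ[μ] μ[(V ⁻¹' s).indicator 1|m] * μ[A|m] := by
  have hprod := (condIndepFun_iff_condExp_inter_preimage_eq_mul hV hA).mp hVA s {1} hs
    (measurableSet_singleton 1)
  rw [eq_indicator_preimage_one_of_eq_zero_or_eq_one hA01, ← Set.inter_indicator_one]
  exact hprod

lemma setIntegral_preimage_mul_eq_condExp_mul_of_condIndepFun (hm : m ≤ mΩ) (hV : Measurable V)
    (hA : Measurable A) (hA01 : ∀ ω, A ω = 0 ∨ A ω = 1) (hVA : CondIndepFun m hm V A μ)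
    {G : Ω → ℝ} (hG : StronglyMeasurable[m] G) {c : ℝ} (hGb : ∀ᵐ ω ∂μ, ‖G ω‖ ≤ c)
    {s : Set ℝ} (hs : MeasurableSet s) :
    ∫ ω in V ⁻¹' s, A ω * G ω ∂μ = ∫ ω in V ⁻¹' s, μ[A|m] ω * G ω ∂μ := by
  have hB : MeasurableSet (V ⁻¹' s) := hV hs
  have hAb : ∀ᵐ ω ∂μ, |A ω| ≤ 1 := .of_forall fun ω => norm_le_one_of_eq_zero_or_eq_one (hA01 ω)
  have hcondb : ∀ᵐ ω ∂μ, ‖(G * μ[A|m]) ω‖ ≤ c * 1 := by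
    filter_upwards [hGb, ae_bdd_abs_condExp_of_ae_bdd_abs (m := m) hAb] with ω hGω hAω
    exact norm_mul_le_of_le hGω hAω
  have hindb : ∀ᵐ ω ∂μ, ‖(V ⁻¹' s).indicator (1 : Ω → ℝ) ω‖ ≤ 1 :=
    .of_forall fun ω => (norm_indicator_le_norm_self _ ω).trans (by simp)
  calc ∫ ω in V ⁻¹' s, A ω * G ω ∂μ
      = ∫ ω, G ω * ((V ⁻¹' s).indicator (1 : Ω → ℝ) * A) ω ∂μ := by
        rw [← integral_mul_indicator_one hB]
        congr 1 with ω
        simp only [Pi.mul_apply]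
        ring
    _ = ∫ ω, G ω * μ[(V ⁻¹' s).indicator 1 * A|m] ω ∂μ :=
        (integral_mul_condExp_of_bound hm hG ((Integrable.of_eq_zero_or_eq_one hA hA01).bdd_mul
          (measurable_one.indicator hB).aestronglyMeasurable hindb) hGb).symm
    _ = ∫ ω, (G * μ[A|m]) ω * μ[(V ⁻¹' s).indicator 1|m] ω ∂μ :=
        integral_congr_ae <| (condExp_indicator_mul_of_condIndepFun hm hV hA hA01 hVA hs).mono
          fun ω hω => by simp only [hω, Pi.mul_apply]; ring
    _ = ∫ ω, (G * μ[A|m]) ω * (V ⁻¹' s).indicator 1 ω ∂μ :=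
        integral_mul_condExp_of_bound hm (hG.mul stronglyMeasurable_condExp)
          ((integrable_const 1).indicator hB) hcondb
    _ = ∫ ω in V ⁻¹' s, μ[A|m] ω * G ω ∂μ := by
        rw [integral_mul_indicator_one hB]
        simp only [Pi.mul_apply, mul_comm]

lemma integral_mul_mul_eq_condExp_mul_mul_of_condIndepFun (hm : m ≤ mΩ) (hV : Measurable V)
    (hA : Measurable A) (hA01 : ∀ ω, A ω = 0 ∨ A ω = 1) (hVA : CondIndepFun m hm V A μ)
    {cV : ℝ} (hVb : ∀ᵐ ω ∂μ, ‖V ω‖ ≤ cV)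
    {G : Ω → ℝ} (hG : StronglyMeasurable[m] G) {c : ℝ} (hGb : ∀ᵐ ω ∂μ, ‖G ω‖ ≤ c) :
    ∫ ω, A ω * V ω * G ω ∂μ = ∫ ω, μ[A|m] ω * V ω * G ω ∂μ := by
  have hAG : Integrable (fun ω => A ω * G ω) μ :=
    (Integrable.of_eq_zero_or_eq_one hA hA01).mul_bdd (hG.mono hm).aestronglyMeasurable hGb
  have hcondG : Integrable (fun ω => μ[A|m] ω * G ω) μ :=
    integrable_condExp.mul_bdd (hG.mono hm).aestronglyMeasurable hGb
  have key := integral_mul_eq_of_forall_setIntegral_eq hV.comap_le hAG hcondG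
    (by rintro _ ⟨s, hs, rfl⟩
        exact setIntegral_preimage_mul_eq_condExp_mul_of_condIndepFun hm hV hA hA01 hVA hG hGb hs)
    (comap_measurable V).stronglyMeasurable hVb
  simpa only [mul_comm, mul_left_comm] using key

variable {e ν : Ω → ℝ} {c cV cν : ℝ}

lemma integrable_and_integral_aipwScore (hm : m ≤ mΩ) (hV : Measurable V) (hA : Measurable A)
    (hA01 : ∀ ω, A ω = 0 ∨ A ω = 1) (hVA : CondIndepFun m hm V A μ)
    (hVb : ∀ᵐ ω ∂μ, ‖V ω‖ ≤ cV) (he : Measurable[m] e) (heA : e =ᵐ[μ] μ[A|m])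
    (hc : 0 < c) (hec : ∀ᵐ ω ∂μ, c ≤ e ω) (hν : Measurable[m] ν) (hνb : ∀ᵐ ω ∂μ, ‖ν ω‖ ≤ cν) :
    Integrable (aipwScore A V e ν) μ ∧ ∫ ω, aipwScore A V e ν ω ∂μ = ∫ ω, V ω ∂μ := by
  have hinv := ae_norm_inv_le_of_le hc hec
  have he_inv : StronglyMeasurable[m] fun ω => (e ω)⁻¹ := he.inv.stronglyMeasurable
  have hAb : ∀ᵐ ω ∂μ, ‖A ω‖ ≤ 1 := .of_forall fun ω => norm_le_one_of_eq_zero_or_eq_one (hA01 ω)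
  have hAint : Integrable A μ := .of_eq_zero_or_eq_one hA hA01
  have hνint : Integrable ν μ := .of_bound (hν.mono hm le_rfl).aestronglyMeasurable cν hνb
  have hAV : Integrable (fun ω => A ω * V ω * (e ω)⁻¹) μ :=
    (hAint.mul_bdd hV.aestronglyMeasurable hVb).mul_bdd (he_inv.mono hm).aestronglyMeasurable hinv
  have hνA : Integrable (fun ω => ν ω * (e ω)⁻¹ * A ω) μ :=
    (hνint.mul_bdd (he_inv.mono hm).aestronglyMeasurable hinv).mul_bdd hA.aestronglyMeasurable hAb
  have hdiff : Integrable (fun ω => A ω * V ω * (e ω)⁻¹ - ν ω * (e ω)⁻¹ * A ω) μ := hAV.sub hνA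
  have he0 : ∀ᵐ ω ∂μ, e ω ≠ 0 := hec.mono fun ω hω => (hc.trans_le hω).ne'
  have hweighted : ∫ ω, A ω * V ω * (e ω)⁻¹ ∂μ = ∫ ω, V ω ∂μ := by
    rw [integral_mul_mul_eq_condExp_mul_mul_of_condIndepFun hm hV hA hA01 hVA hVb he_inv hinv]
    refine integral_congr_ae ?_
    filter_upwards [heA, he0] with ω hω hω0
    rw [← hω]
    field_simp
  have hregression : ∫ ω, ν ω * (e ω)⁻¹ * A ω ∂μ = ∫ ω, ν ω ∂μ := by
    have hbound : ∀ᵐ ω ∂μ, ‖ν ω * (e ω)⁻¹‖ ≤ cν * c⁻¹ := by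
      filter_upwards [hνb, hinv] with ω h₁ h₂ using norm_mul_le_of_le h₁ h₂
    refine (integral_mul_condExp_of_bound hm (hν.mul he.inv).stronglyMeasurable hAint
      hbound).symm.trans ?_
    refine integral_congr_ae ?_
    filter_upwards [heA, he0] with ω hω hω0
    simp only [← hω, Pi.mul_apply, Pi.inv_apply]
    field_simp
  have hsplit : ∀ ω,
      aipwScore A V e ν ω = ν ω + (A ω * V ω * (e ω)⁻¹ - ν ω * (e ω)⁻¹ * A ω) := fun ω => by
    rw [aipwScore]
    ring
  refine ⟨(hνint.add hdiff).congr (.of_forall fun ω => (hsplit ω).symm), ?_⟩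
  simp_rw [hsplit]
  rw [integral_add hνint hdiff, integral_sub hAV hνA, hweighted, hregression]
  ring

end ProbabilityTheory

theorem ate_doubly_robust_representation_general
    {Ω : Type*} [MeasurableSpace Ω] [StandardBorelSpace Ω]
    (P : Measure Ω) [IsProbabilityMeasure P]
    (d : ℕ) (S : Ω → (Fin d → ℝ)) (hS : Measurable S)
    (T : Ω → ℝ) (hT : Measurable T) (hT01 : ∀ ω, T ω = 0 ∨ T ω = 1)
    (Y0 Y1 : Ω → ℝ) (hY0 : Measurable Y0) (hY1 : Measurable Y1)
    (hY0b : ∃ C, ∀ ω, |Y0 ω| ≤ C) (hY1b : ∃ C, ∀ ω, |Y1 ω| ≤ C)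
    (Y : Ω → ℝ) (hYdef : ∀ ω, Y ω = T ω * Y1 ω + (1 - T ω) * Y0 ω)
    (M : ℝ) (hM : 0 < M)
    (π0 : (Fin d → ℝ) → ℝ) (hπ0m : Measurable π0)
    (hπ0mom : ∀ h : (Fin d → ℝ) → ℝ, Measurable h → (∃ C, ∀ x, |h x| ≤ C) →
      ∫ ω, T ω * h (S ω) ∂P = ∫ ω, π0 (S ω) * h (S ω) ∂P)
    (hpos : ∀ᵐ ω ∂P, 1 / M ≤ π0 (S ω) ∧ π0 (S ω) ≤ 1 - 1 / M)
    (μ1 μ0 : (Fin d → ℝ) → ℝ) (hμ1m : Measurable μ1) (hμ0m : Measurable μ0)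
    (hμ1b : ∃ C, ∀ x, |μ1 x| ≤ C) (hμ0b : ∃ C, ∀ x, |μ0 x| ≤ C)
    (hign : CondIndepFun (MeasurableSpace.comap S inferInstance) hS.comap_le
      (fun ω => (Y0 ω, Y1 ω)) T P) :
    ∫ ω, (Y1 ω - Y0 ω) ∂P
      = ∫ ω, (μ1 (S ω) + T ω * (Y ω - μ1 (S ω)) / π0 (S ω)
          - μ0 (S ω) - (1 - T ω) * (Y ω - μ0 (S ω)) / (1 - π0 (S ω))) ∂P := by
  obtain ⟨C0, hY0b⟩ := hY0b
  obtain ⟨C1, hY1b⟩ := hY1b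
  obtain ⟨D1, hμ1b⟩ := hμ1b
  obtain ⟨D0, hμ0b⟩ := hμ0b
  have hm := hS.comap_le
  have hSm : Measurable[MeasurableSpace.comap S inferInstance] S := comap_measurable S
  have hTint : Integrable T P := .of_eq_zero_or_eq_one hT hT01
  have hM' : 0 < 1 / M := one_div_pos.mpr hM
  have hπint : Integrable (fun ω => π0 (S ω)) P :=
    .of_bound (hπ0m.comp hS).aestronglyMeasurable 1 <| hpos.mono fun ω h =>
      abs_le.mpr ⟨by linarith [h.1], by linarith [h.2]⟩
  have hπ := ae_eq_condExp_comap_of_forall_integral_mul_eq hS hTint hπ0m hπint hπ0mom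
  obtain ⟨hint1, hmean1⟩ := integrable_and_integral_aipwScore (e := fun ω => π0 (S ω))
    (ν := fun ω => μ1 (S ω)) hm hY1 hT hT01 (hign.comp measurable_snd measurable_id)
    (.of_forall hY1b) (hπ0m.comp hSm) hπ hM' (hpos.mono fun _ h => h.1)
    (hμ1m.comp hSm) (.of_forall fun ω => hμ1b (S ω))
  obtain ⟨hint0, hmean0⟩ := integrable_and_integral_aipwScore (A := fun ω => 1 - T ω)
    (e := fun ω => 1 - π0 (S ω)) (ν := fun ω => μ0 (S ω)) hm hY0 (measurable_const.sub hT)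
    (fun ω => by rcases hT01 ω with h | h <;> simp [h])
    (hign.comp measurable_fst (measurable_const.sub measurable_id)) (.of_forall hY0b)
    (measurable_const.sub (hπ0m.comp hSm)) (one_sub_ae_eq_condExp_one_sub hm hTint hπ)
    hM' (hpos.mono fun _ h => by linarith [h.2]) (hμ0m.comp hSm) (.of_forall fun ω => hμ0b (S ω))
  calc ∫ ω, (Y1 ω - Y0 ω) ∂P = ∫ ω, Y1 ω ∂P - ∫ ω, Y0 ω ∂P :=
        integral_sub (.of_bound hY1.aestronglyMeasurable C1 (.of_forall hY1b))
          (.of_bound hY0.aestronglyMeasurable C0 (.of_forall hY0b))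
    _ = ∫ ω, (aipwScore T Y1 (fun ω => π0 (S ω)) (fun ω => μ1 (S ω)) ω
          - aipwScore (fun ω => 1 - T ω) Y0 (fun ω => 1 - π0 (S ω)) (fun ω => μ0 (S ω)) ω) ∂P := by
        rw [integral_sub hint1 hint0, hmean1, hmean0]
    _ = _ := integral_congr_ae <| .of_forall fun ω => by
        rcases hT01 ω with h | h <;> simp only [aipwScore, hYdef, h] <;> ring

/-- Doubly robust (augmented inverse probability weighting) representation of
the average treatment effect. -/
theorem ate_doubly_robust_representation
    {Ω : Type*} [MeasurableSpace Ω] [StandardBorelSpace Ω] [Nonempty Ω]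
    (P : Measure Ω) [IsProbabilityMeasure P]
    (d : ℕ) (S : Ω → (Fin d → ℝ)) (hS : Measurable S)
    (T : Ω → ℝ) (hT : Measurable T) (hT01 : ∀ ω, T ω = 0 ∨ T ω = 1)
    (Y0 Y1 : Ω → ℝ) (hY0 : Measurable Y0) (hY1 : Measurable Y1)
    (hY0b : ∃ C, ∀ ω, |Y0 ω| ≤ C) (hY1b : ∃ C, ∀ ω, |Y1 ω| ≤ C)
    (Y : Ω → ℝ) (hYdef : ∀ ω, Y ω = T ω * Y1 ω + (1 - T ω) * Y0 ω)
    (M : ℝ) (hM : 0 < M)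
    (π0 : (Fin d → ℝ) → ℝ) (hπ0m : Measurable π0) (hπ0b : ∃ C, ∀ x, |π0 x| ≤ C)
    (hπ0mom : ∀ h : (Fin d → ℝ) → ℝ, Measurable h → (∃ C, ∀ x, |h x| ≤ C) →
      ∫ ω, T ω * h (S ω) ∂P = ∫ ω, π0 (S ω) * h (S ω) ∂P)
    (hpos : ∀ᵐ ω ∂P, 1 / M ≤ π0 (S ω) ∧ π0 (S ω) ≤ 1 - 1 / M)
    (μ1 μ0 : (Fin d → ℝ) → ℝ) (hμ1m : Measurable μ1) (hμ0m : Measurable μ0)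
    (hμ1b : ∃ C, ∀ x, |μ1 x| ≤ C) (hμ0b : ∃ C, ∀ x, |μ0 x| ≤ C)
    (hμ1mom : ∀ h : (Fin d → ℝ) → ℝ, Measurable h → (∃ C, ∀ x, |h x| ≤ C) →
      ∫ ω, T ω * Y ω * h (S ω) ∂P = ∫ ω, T ω * μ1 (S ω) * h (S ω) ∂P)
    (hμ0mom : ∀ h : (Fin d → ℝ) → ℝ, Measurable h → (∃ C, ∀ x, |h x| ≤ C) →
      ∫ ω, (1 - T ω) * Y ω * h (S ω) ∂P = ∫ ω, (1 - T ω) * μ0 (S ω) * h (S ω) ∂P)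
    (hign : CondIndepFun (MeasurableSpace.comap S inferInstance) hS.comap_le
      (fun ω => (Y0 ω, Y1 ω)) T P) :
    ∫ ω, (Y1 ω - Y0 ω) ∂P
      = ∫ ω, (μ1 (S ω) + T ω * (Y ω - μ1 (S ω)) / π0 (S ω)
          - μ0 (S ω) - (1 - T ω) * (Y ω - μ0 (S ω)) / (1 - π0 (S ω))) ∂P :=
  ate_doubly_robust_representation_general P d S hS T hT hT01 Y0 Y1 hY0 hY1 hY0b hY1b Y hYdef M hM
    π0 hπ0m hπ0mom hpos μ1 μ0 hμ1m hμ0m hμ1b hμ0b hign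
end

section
/- Under the stated dynamic treatment setup, the doubly robust pseudo-outcome Y^# := ν⁰(S̄₂) + T₂·(Y(1,1) − ν⁰(S̄₂))/ρ⁰(S̄₂) satisfies E[T₁ · Y^# · h(S₁)] = E[T₁ · μ⁰(S₁) · h(S₁)] for every bounded measurable h : ℝ^{d₁} → ℝ; equivalently, μ⁰(S₁) is a version of the conditional expectation of Y^# given σ(S₁) under the conditional probability measure P(· | T₁ = 1). -/
/-!
Since `T₁ ∈ {0,1}`, a `T₁`-weighted moment under `P` is `P(T₁ = 1)` times the corresponding
moment under `Q = P(· | T₁ = 1)`. Under `Q` the moment condition for `ρ⁰` says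
`ρ⁰(S̄₂) = Q[T₂ | S̄₂]`, and sequential ignorability lets `T₂` be replaced by this conditional
mean also against `Y(1,1)`: `E[T₁ T₂ Y(1,1) j(S̄₂)] = E[T₁ ρ⁰(S̄₂) Y(1,1) j(S̄₂)]` for bounded `j`.
With `j = h / ρ⁰` the inverse-propensity term of the pseudo-outcome becomes
`E[T₁ Y(1,1) h] − E[T₁ ν⁰ h]`, the `ν⁰` terms cancel, and the moment condition for `μ⁰` finishes.
-/

open MeasureTheory ProbabilityTheory
open scoped ENNReal

lemma exists_abs_mul_le {α : Type*} {f g : α → ℝ} (hf : ∃ C, ∀ x, |f x| ≤ C)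
    (hg : ∃ C, ∀ x, |g x| ≤ C) : ∃ C, ∀ x, |f x * g x| ≤ C :=
  let ⟨C, hC⟩ := hf
  let ⟨D, hD⟩ := hg
  ⟨C * D, fun x => abs_mul (f x) (g x) ▸
    mul_le_mul (hC x) (hD x) (abs_nonneg _) ((abs_nonneg _).trans (hC x))⟩

lemma exists_measurable_bounded_mul_eq {α : Type*} [MeasurableSpace α] {ρ g : α → ℝ} {ε : ℝ}
    (hε : 0 < ε) (hρ : Measurable ρ) (hg : Measurable g) (hgb : ∃ C, ∀ x, |g x| ≤ C) :
    ∃ j : α → ℝ, Measurable j ∧ (∃ C, ∀ x, |j x| ≤ C) ∧ ∀ x, ε ≤ ρ x → ρ x * j x = g x := by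
  obtain ⟨C, hC⟩ := hgb
  refine ⟨fun x => g x / max (ρ x) ε, hg.div (hρ.max measurable_const), ⟨C / ε, fun x => ?_⟩,
    fun x hx => ?_⟩
  · rw [abs_div, abs_of_pos (lt_max_of_lt_right hε)]
    exact div_le_div₀ ((abs_nonneg _).trans (hC x)) (hC x) hε (le_max_right _ _)
  · dsimp only
    rw [max_eq_left hx, mul_div_cancel₀ _ (hε.trans_le hx).ne']

lemma indicator_preimage_one_eq_self {α : Type*} {T : α → ℝ} (h01 : ∀ x, T x = 0 ∨ T x = 1) :
    (T ⁻¹' {1}).indicator (fun _ => (1 : ℝ)) = T := by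
  funext x
  rcases h01 x with h | h <;> simp [h]

section

variable {α : Type*} [MeasurableSpace α] {μ : Measure α}

lemma memLp_top_of_abs_le {f : α → ℝ} (hf : Measurable f) (hb : ∃ C, ∀ x, |f x| ≤ C) :
    MemLp f ∞ μ :=
  let ⟨C, hC⟩ := hb
  memLp_top_of_bound hf.aestronglyMeasurable C (ae_of_all _ hC)

lemma MeasureTheory.MemLp.mul_of_top {f g : α → ℝ} (hf : MemLp f ∞ μ) (hg : MemLp g ∞ μ) :
    MemLp (fun x => f x * g x) ∞ μ :=
  hg.mul' hf

lemma memLp_top_comp_of_abs_le {β : Type*} [MeasurableSpace β] {g : β → ℝ} (hg : Measurable g)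
    (hb : ∃ C, ∀ x, |g x| ≤ C) {S : α → β} (hS : Measurable S) :
    MemLp (fun x => g (S x)) ∞ μ :=
  memLp_top_of_abs_le (hg.comp hS) (hb.imp fun _ hC _ => hC _)

lemma memLp_top_of_eq_zero_or_eq_one {T : α → ℝ} (hT : Measurable T)
    (h01 : ∀ x, T x = 0 ∨ T x = 1) : MemLp T ∞ μ :=
  memLp_top_of_abs_le hT ⟨1, fun x => by rcases h01 x with h | h <;> simp [h]⟩

lemma setIntegral_eq_integral_mul_indicator_one {s : Set α} (hs : MeasurableSet s) (f : α → ℝ) :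
    ∫ x in s, f x ∂μ = ∫ x, f x * s.indicator (fun _ => (1 : ℝ)) x ∂μ := by
  rw [← integral_indicator hs]
  congr 1
  funext x
  by_cases hx : x ∈ s <;> simp [hx]

lemma integral_mul_eq_setIntegral {T : α → ℝ} (hT : Measurable T)
    (h01 : ∀ x, T x = 0 ∨ T x = 1) (f : α → ℝ) :
    ∫ x, T x * f x ∂μ = ∫ x in {x | T x = 1}, f x ∂μ := by
  have hA : MeasurableSet {x | T x = 1} := hT (measurableSet_singleton 1)
  rw [setIntegral_eq_integral_mul_indicator_one hA]
  congr 1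
  funext x
  rcases h01 x with h | h <;> simp [h]

lemma integral_cond_eq_inv_mul_integral_mul {T : α → ℝ} (hT : Measurable T)
    (h01 : ∀ x, T x = 0 ∨ T x = 1) (f : α → ℝ) :
    ∫ x, f x ∂μ[|{x | T x = 1}] = (μ.real {x | T x = 1})⁻¹ * ∫ x, T x * f x ∂μ := by
  rw [integral_mul_eq_setIntegral hT h01, ProbabilityTheory.cond, integral_smul_measure,
    smul_eq_mul, ENNReal.toReal_inv, measureReal_def]

lemma integral_mul_eq_mul_integral_cond [IsFiniteMeasure μ] {T : α → ℝ} (hT : Measurable T)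
    (h01 : ∀ x, T x = 0 ∨ T x = 1) (f : α → ℝ) :
    ∫ x, T x * f x ∂μ = μ.real {x | T x = 1} * ∫ x, f x ∂μ[|{x | T x = 1}] := by
  rw [integral_cond_eq_inv_mul_integral_mul hT h01]
  rcases eq_or_ne (μ.real {x | T x = 1}) 0 with h | h
  · rw [h, zero_mul, integral_mul_eq_setIntegral hT h01,
      Measure.restrict_eq_zero.2 ((measureReal_eq_zero_iff).1 h), integral_zero_measure]
  · rw [mul_inv_cancel_left₀ h]

end

section

variable {Ω : Type*} {m mΩ : MeasurableSpace Ω} {μ : Measure Ω} [IsFiniteMeasure μ]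

lemma integral_mul_condExp (hm : m ≤ mΩ) {W F : Ω → ℝ} (hW : StronglyMeasurable[m] W)
    (hWF : Integrable (W * F) μ) (hF : Integrable F μ) :
    ∫ ω, W ω * F ω ∂μ = ∫ ω, W ω * μ[F|m] ω ∂μ :=
  (integral_condExp hm).symm.trans
    (integral_congr_ae (condExp_mul_of_stronglyMeasurable_left hW hWF hF))

lemma integral_mul_eq_zero_of_forall_setIntegral_preimage_eq_zero {X F : Ω → ℝ}
    (hX : Measurable X) (hXb : MemLp X ∞ μ) (hF : Integrable F μ)
    (h : ∀ s, MeasurableSet s → ∫ ω in X ⁻¹' s, F ω ∂μ = 0) :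
    ∫ ω, X ω * F ω ∂μ = 0 := by
  have hcondExp : 0 =ᵐ[μ] μ[F|MeasurableSpace.comap X inferInstance] := by
    refine ae_eq_condExp_of_forall_setIntegral_eq hX.comap_le hF
      (fun _ _ _ => integrableOn_zero) ?_ aestronglyMeasurable_const
    rintro _ ⟨s, hs, rfl⟩ -
    simp [h s hs]
  rw [integral_mul_condExp hX.comap_le (comap_measurable X).stronglyMeasurable
    (hF.mul_of_top_right hXb) hF]
  exact integral_eq_zero_of_ae (hcondExp.mono fun ω hω => by simp [← hω])

lemma ae_eq_condExp_comap_of_forall_integral_mul_eq {β : Type*} [MeasurableSpace β]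
    {S : Ω → β} (hS : Measurable S) {T : Ω → ℝ} (hT : Integrable T μ) {r : β → ℝ}
    (hr : Measurable r) (hrb : ∃ C, ∀ x, |r x| ≤ C)
    (hmom : ∀ h : β → ℝ, Measurable h → (∃ C, ∀ x, |h x| ≤ C) →
      ∫ ω, T ω * h (S ω) ∂μ = ∫ ω, r (S ω) * h (S ω) ∂μ) :
    (fun ω => r (S ω)) =ᵐ[μ] μ[T|MeasurableSpace.comap S inferInstance] := by
  refine ae_eq_condExp_of_forall_setIntegral_eq hS.comap_le hT
    (fun _ _ _ => ((memLp_top_comp_of_abs_le hr hrb hS).integrable le_top).integrableOn) ?_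
    (hr.comp (comap_measurable S)).aestronglyMeasurable
  rintro _ ⟨s, hs, rfl⟩ -
  rw [setIntegral_eq_integral_mul_indicator_one (hS hs),
    setIntegral_eq_integral_mul_indicator_one (hS hs)]
  exact (hmom (s.indicator fun _ => 1) (measurable_const.indicator hs)
    ⟨1, fun x => by by_cases hx : x ∈ s <;> simp [hx]⟩).symm

end

namespace ProbabilityTheory.CondIndepFun

variable {Ω : Type*} {m mΩ : MeasurableSpace Ω} [StandardBorelSpace Ω] {hm : m ≤ mΩ}
  {μ : Measure Ω} [IsFiniteMeasure μ] {X T W : Ω → ℝ}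

theorem setIntegral_preimage_mul_eq_condExp_mul (hXT : CondIndepFun m hm X T μ)
    (hX : Measurable X) (hT : Measurable T) (h01 : ∀ ω, T ω = 0 ∨ T ω = 1)
    (hW : StronglyMeasurable[m] W) (hWb : MemLp W ∞ μ) {s : Set ℝ} (hs : MeasurableSet s) :
    ∫ ω in X ⁻¹' s, T ω * W ω ∂μ = ∫ ω in X ⁻¹' s, μ[T|m] ω * W ω ∂μ := by
  set B := X ⁻¹' s
  have hB : MeasurableSet B := hX hs
  have hBT : MeasurableSet (B ∩ T ⁻¹' {1}) := hB.inter (hT (measurableSet_singleton 1))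
  have hfactor : μ⟦B ∩ T ⁻¹' {1}|m⟧ =ᵐ[μ] μ⟦B|m⟧ * μ[T|m] := by
    have h := (condIndepFun_iff_condExp_inter_preimage_eq_mul hX hT).1 hXT s {1} hs
      (measurableSet_singleton 1)
    rwa [indicator_preimage_one_eq_self h01] at h
  have hWT : StronglyMeasurable[m] (W * μ[T|m]) := hW.mul stronglyMeasurable_condExp
  have hWTb : MemLp (W * μ[T|m]) ∞ μ :=
    ((memLp_top_of_eq_zero_or_eq_one hT h01).condExp le_top).mul hWb
  have hindicator (A : Set Ω) (hA : MeasurableSet A) : MemLp (A.indicator fun _ => (1 : ℝ)) ∞ μ :=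
    (memLp_top_const 1).indicator hA
  calc ∫ ω in B, T ω * W ω ∂μ
      = ∫ ω, W ω * (B ∩ T ⁻¹' {1}).indicator (fun _ => (1 : ℝ)) ω ∂μ := by
        rw [setIntegral_eq_integral_mul_indicator_one hB]
        congr 1
        funext ω
        by_cases hω : ω ∈ B <;> rcases h01 ω with h | h <;> simp [hω, h]
    _ = ∫ ω, W ω * (μ⟦B ∩ T ⁻¹' {1}|m⟧) ω ∂μ :=
        integral_mul_condExp hm hW (((hindicator _ hBT).mul hWb).integrable le_top)
          ((hindicator _ hBT).integrable le_top)
    _ = ∫ ω, (W * μ[T|m]) ω * (μ⟦B|m⟧) ω ∂μ :=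
        integral_congr_ae (hfactor.mono fun ω hω => by simp only [hω, Pi.mul_apply]; ring)
    _ = ∫ ω, (W * μ[T|m]) ω * B.indicator (fun _ => (1 : ℝ)) ω ∂μ :=
        (integral_mul_condExp hm hWT (((hindicator B hB).mul hWTb).integrable le_top)
          ((hindicator B hB).integrable le_top)).symm
    _ = ∫ ω in B, μ[T|m] ω * W ω ∂μ := by
        rw [setIntegral_eq_integral_mul_indicator_one hB]
        simp only [Pi.mul_apply, mul_comm (W _)]

theorem integral_mul_mul_eq_condExp_mul_mul (hXT : CondIndepFun m hm X T μ)
    (hX : Measurable X) (hXb : MemLp X ∞ μ) (hT : Measurable T) (h01 : ∀ ω, T ω = 0 ∨ T ω = 1)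
    (hW : StronglyMeasurable[m] W) (hWb : MemLp W ∞ μ) :
    ∫ ω, T ω * X ω * W ω ∂μ = ∫ ω, μ[T|m] ω * X ω * W ω ∂μ := by
  have hTW : MemLp (fun ω => T ω * W ω) ∞ μ :=
    (memLp_top_of_eq_zero_or_eq_one hT h01).mul_of_top hWb
  have hcTW : MemLp (fun ω => μ[T|m] ω * W ω) ∞ μ :=
    ((memLp_top_of_eq_zero_or_eq_one hT h01).condExp le_top).mul_of_top hWb
  have hF : Integrable (fun ω => T ω * W ω - μ[T|m] ω * W ω) μ :=
    (hTW.integrable le_top).sub (hcTW.integrable le_top)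
  -- Conditional independence only speaks about the events `{X ∈ s}`; since `T W - μ[T|m] W`
  -- integrates to zero over each of them, its conditional expectation given `σ(X)` vanishes.
  have hzero := integral_mul_eq_zero_of_forall_setIntegral_preimage_eq_zero hX hXb hF
    fun s hs => by
      rw [integral_sub (hTW.integrable le_top).integrableOn (hcTW.integrable le_top).integrableOn,
        setIntegral_preimage_mul_eq_condExp_mul hXT hX hT h01 hW hWb hs, sub_self]
  calc ∫ ω, T ω * X ω * W ω ∂μ = ∫ ω, X ω * (T ω * W ω) ∂μ := by congr 1; funext ω; ring
    _ = ∫ ω, X ω * (μ[T|m] ω * W ω) ∂μ := by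
      rw [← sub_eq_zero, ← integral_sub ((hXb.mul_of_top hTW).integrable le_top)
        ((hXb.mul_of_top hcTW).integrable le_top), ← hzero]
      congr 1; funext ω; ring
    _ = ∫ ω, μ[T|m] ω * X ω * W ω ∂μ := by congr 1; funext ω; ring

end ProbabilityTheory.CondIndepFun

theorem integral_mul_mul_comp_eq_of_condIndepFun_cond {Ω β : Type*} [MeasurableSpace Ω]
    [StandardBorelSpace Ω] [MeasurableSpace β] {P : Measure Ω} [IsFiniteMeasure P]
    {S : Ω → β} {T₁ T₂ X : Ω → ℝ} {r j : β → ℝ} (hS : Measurable S)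
    (hT₁ : Measurable T₁) (hT₁01 : ∀ ω, T₁ ω = 0 ∨ T₁ ω = 1)
    (hT₂ : Measurable T₂) (hT₂01 : ∀ ω, T₂ ω = 0 ∨ T₂ ω = 1)
    (hX : Measurable X) (hXb : ∃ C, ∀ ω, |X ω| ≤ C)
    (hr : Measurable r) (hrb : ∃ C, ∀ x, |r x| ≤ C)
    (hmom : ∀ h : β → ℝ, Measurable h → (∃ C, ∀ x, |h x| ≤ C) →
      ∫ ω, T₁ ω * T₂ ω * h (S ω) ∂P = ∫ ω, T₁ ω * r (S ω) * h (S ω) ∂P)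
    (hind : CondIndepFun (MeasurableSpace.comap S inferInstance) hS.comap_le X T₂
      (P[|{ω | T₁ ω = 1}]))
    (hj : Measurable j) (hjb : ∃ C, ∀ x, |j x| ≤ C) :
    ∫ ω, T₁ ω * T₂ ω * X ω * j (S ω) ∂P = ∫ ω, T₁ ω * r (S ω) * X ω * j (S ω) ∂P := by
  set Q := P[|{ω | T₁ ω = 1}]
  have hQmom (h : β → ℝ) (hh : Measurable h) (hhb : ∃ C, ∀ x, |h x| ≤ C) :
      ∫ ω, T₂ ω * h (S ω) ∂Q = ∫ ω, r (S ω) * h (S ω) ∂Q := by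
    simp only [Q, integral_cond_eq_inv_mul_integral_mul hT₁ hT₁01, ← mul_assoc, hmom h hh hhb]
  have hT₂Q : MemLp T₂ ∞ Q := memLp_top_of_eq_zero_or_eq_one hT₂ hT₂01
  have hr_condExp := ae_eq_condExp_comap_of_forall_integral_mul_eq hS (hT₂Q.integrable le_top)
    hr hrb hQmom
  have hQ : ∫ ω, T₂ ω * X ω * j (S ω) ∂Q = ∫ ω, r (S ω) * X ω * j (S ω) ∂Q := by
    refine (hind.integral_mul_mul_eq_condExp_mul_mul (W := fun ω => j (S ω)) hX
      (memLp_top_of_abs_le hX hXb) hT₂ hT₂01 (hj.comp (comap_measurable S)).stronglyMeasurable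
      (memLp_top_comp_of_abs_le hj hjb hS)).trans ?_
    exact integral_congr_ae (hr_condExp.mono fun ω hω => congrArg (· * X ω * j (S ω)) hω.symm)
  simp only [mul_assoc, integral_mul_eq_mul_integral_cond hT₁ hT₁01] at hQ ⊢
  rw [hQ]

noncomputable def drPseudoOutcome (t₂ y ν ρ : ℝ) : ℝ := ν + t₂ * (y - ν) / ρ

lemma integral_mul_drPseudoOutcome_mul_eq {Ω : Type*} [MeasurableSpace Ω] {P : Measure Ω}
    [IsFiniteMeasure P] {T₁ T₂ Y ν ρ g j : Ω → ℝ} (hT₁ : MemLp T₁ ∞ P) (hT₂ : MemLp T₂ ∞ P)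
    (hY : MemLp Y ∞ P) (hν : MemLp ν ∞ P) (hg : MemLp g ∞ P) (hj : MemLp j ∞ P)
    (hρj : ∀ᵐ ω ∂P, ρ ω ≠ 0 ∧ ρ ω * j ω = g ω) :
    ∫ ω, T₁ ω * drPseudoOutcome (T₂ ω) (Y ω) (ν ω) (ρ ω) * g ω ∂P
      = ∫ ω, T₁ ω * T₂ ω * Y ω * j ω ∂P - ∫ ω, T₁ ω * T₂ ω * (ν ω * j ω) ∂P
        + ∫ ω, T₁ ω * ν ω * g ω ∂P := by
  have hT₁T₂ := hT₁.mul_of_top hT₂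
  have hint₁ := ((hT₁T₂.mul_of_top hY).mul_of_top hj).integrable le_top
  have hint₂ := (hT₁T₂.mul_of_top (hν.mul_of_top hj)).integrable le_top
  have hint₃ := ((hT₁.mul_of_top hν).mul_of_top hg).integrable le_top
  rw [← integral_sub hint₁ hint₂, ← integral_add ?_ hint₃]
  · refine integral_congr_ae (hρj.mono fun ω ⟨hρ, h⟩ => ?_)
    simp only [drPseudoOutcome, ← h]
    field_simp
    ring
  · exact hint₁.sub hint₂

theorem dte_pseudo_outcome_identification_general
    {Ω : Type*} [MeasurableSpace Ω] [StandardBorelSpace Ω]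
    (P : Measure Ω) [IsProbabilityMeasure P]
    (d₁ d₂ : ℕ)
    (S1 : Ω → (Fin d₁ → ℝ)) (hS1 : Measurable S1)
    (S2 : Ω → (Fin d₂ → ℝ)) (hS2 : Measurable S2)
    (T1 T2 : Ω → ℝ) (hT1 : Measurable T1) (hT2 : Measurable T2)
    (hT1_01 : ∀ ω, T1 ω = 0 ∨ T1 ω = 1) (hT2_01 : ∀ ω, T2 ω = 0 ∨ T2 ω = 1)
    (Y11 : Ω → ℝ) (hY11m : Measurable Y11) (hY11b : ∃ C, ∀ ω, |Y11 ω| ≤ C)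
    (M : ℝ) (hM : 0 < M)
    (π0 : (Fin d₁ → ℝ) → ℝ) (ρ0 ν0 : (Fin d₁ → ℝ) × (Fin d₂ → ℝ) → ℝ)
    (μ0 : (Fin d₁ → ℝ) → ℝ)
    (hρ0m : Measurable ρ0) (hν0m : Measurable ν0)
    (hρ0b : ∃ C, ∀ x, |ρ0 x| ≤ C)
    (hν0b : ∃ C, ∀ x, |ν0 x| ≤ C)
    (hρ0mom : ∀ h : (Fin d₁ → ℝ) × (Fin d₂ → ℝ) → ℝ, Measurable h → (∃ C, ∀ x, |h x| ≤ C) →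
      ∫ ω, T1 ω * T2 ω * h (S1 ω, S2 ω) ∂P = ∫ ω, T1 ω * ρ0 (S1 ω, S2 ω) * h (S1 ω, S2 ω) ∂P)
    (hμ0mom : ∀ h : (Fin d₁ → ℝ) → ℝ, Measurable h → (∃ C, ∀ x, |h x| ≤ C) →
      ∫ ω, T1 ω * Y11 ω * h (S1 ω) ∂P = ∫ ω, T1 ω * μ0 (S1 ω) * h (S1 ω) ∂P)
    (hpos : ∀ᵐ ω ∂P, 1 / M ≤ π0 (S1 ω) ∧ 1 / M ≤ ρ0 (S1 ω, S2 ω))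
    (hign2 : CondIndepFun
      (MeasurableSpace.comap (fun ω => (S1 ω, S2 ω)) inferInstance)
      (Measurable.comap_le (hS1.prodMk hS2))
      Y11 T2 (P[|{ω | T1 ω = 1}])) :
    ∀ h : (Fin d₁ → ℝ) → ℝ, Measurable h → (∃ C, ∀ x, |h x| ≤ C) →
      ∫ ω, T1 ω * (ν0 (S1 ω, S2 ω)
          + T2 ω * (Y11 ω - ν0 (S1 ω, S2 ω)) / ρ0 (S1 ω, S2 ω)) * h (S1 ω) ∂P
        = ∫ ω, T1 ω * μ0 (S1 ω) * h (S1 ω) ∂P := by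
  intro g hg hgb
  have hS : Measurable fun ω => (S1 ω, S2 ω) := hS1.prodMk hS2
  obtain ⟨j, hj, hjb, hρj⟩ := exists_measurable_bounded_mul_eq (one_div_pos.2 hM) hρ0m
    (hg.comp measurable_fst) (hgb.imp fun _ hC x => hC x.1)
  replace hρj : ∀ᵐ ω ∂P, ρ0 (S1 ω, S2 ω) ≠ 0 ∧ ρ0 (S1 ω, S2 ω) * j (S1 ω, S2 ω) = g (S1 ω) :=
    hpos.mono fun ω hω => ⟨((one_div_pos.2 hM).trans_le hω.2).ne', hρj _ hω.2⟩
  have hY : ∫ ω, T1 ω * T2 ω * Y11 ω * j (S1 ω, S2 ω) ∂P = ∫ ω, T1 ω * Y11 ω * g (S1 ω) ∂P :=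
    (integral_mul_mul_comp_eq_of_condIndepFun_cond hS hT1 hT1_01 hT2 hT2_01
      hY11m hY11b hρ0m hρ0b hρ0mom hign2 hj hjb).trans
      (integral_congr_ae (hρj.mono fun ω h => by dsimp only; rw [← h.2]; ring))
  have hν : ∫ ω, T1 ω * T2 ω * (ν0 (S1 ω, S2 ω) * j (S1 ω, S2 ω)) ∂P
      = ∫ ω, T1 ω * ν0 (S1 ω, S2 ω) * g (S1 ω) ∂P :=
    (hρ0mom (fun x => ν0 x * j x) (hν0m.fun_mul hj) (exists_abs_mul_le hν0b hjb)).trans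
      (integral_congr_ae (hρj.mono fun ω h => by dsimp only; rw [← h.2]; ring))
  refine (integral_mul_drPseudoOutcome_mul_eq (memLp_top_of_eq_zero_or_eq_one hT1 hT1_01)
    (memLp_top_of_eq_zero_or_eq_one hT2 hT2_01) (memLp_top_of_abs_le hY11m hY11b)
    (memLp_top_comp_of_abs_le hν0m hν0b hS) (memLp_top_comp_of_abs_le hg hgb hS1)
    (memLp_top_comp_of_abs_le hj hjb hS) hρj).trans ?_
  rw [hY, hν, sub_add_cancel, hμ0mom g hg hgb]

/-- Doubly robust identification of the first-exposure outcome regression: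
`μ⁰(S₁)` is the conditional mean of the doubly robust pseudo-outcome
`ν⁰(S̄₂) + T₂·(Y(1,1) − ν⁰(S̄₂))/ρ⁰(S̄₂)` given `S₁` within the group `T₁ = 1`. -/
theorem dte_pseudo_outcome_identification
    {Ω : Type*} [MeasurableSpace Ω] [StandardBorelSpace Ω] [Nonempty Ω]
    (P : Measure Ω) [IsProbabilityMeasure P]
    (d₁ d₂ : ℕ)
    (S1 : Ω → (Fin d₁ → ℝ)) (hS1 : Measurable S1)
    (S2 : Ω → (Fin d₂ → ℝ)) (hS2 : Measurable S2)
    (T1 T2 : Ω → ℝ) (hT1 : Measurable T1) (hT2 : Measurable T2)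
    (hT1_01 : ∀ ω, T1 ω = 0 ∨ T1 ω = 1) (hT2_01 : ∀ ω, T2 ω = 0 ∨ T2 ω = 1)
    (Y11 : Ω → ℝ) (hY11m : Measurable Y11) (hY11b : ∃ C, ∀ ω, |Y11 ω| ≤ C)
    (Y : Ω → ℝ) (hYm : Measurable Y)
    (hcons : ∀ ω, T1 ω * T2 ω * Y ω = T1 ω * T2 ω * Y11 ω)
    (M : ℝ) (hM : 0 < M)
    (π0 : (Fin d₁ → ℝ) → ℝ) (ρ0 ν0 : (Fin d₁ → ℝ) × (Fin d₂ → ℝ) → ℝ)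
    (μ0 : (Fin d₁ → ℝ) → ℝ)
    (hπ0m : Measurable π0) (hρ0m : Measurable ρ0) (hν0m : Measurable ν0) (hμ0m : Measurable μ0)
    (hπ0b : ∃ C, ∀ x, |π0 x| ≤ C) (hρ0b : ∃ C, ∀ x, |ρ0 x| ≤ C)
    (hν0b : ∃ C, ∀ x, |ν0 x| ≤ C) (hμ0b : ∃ C, ∀ x, |μ0 x| ≤ C)
    (hπ0mom : ∀ h : (Fin d₁ → ℝ) → ℝ, Measurable h → (∃ C, ∀ x, |h x| ≤ C) →
      ∫ ω, T1 ω * h (S1 ω) ∂P = ∫ ω, π0 (S1 ω) * h (S1 ω) ∂P)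
    (hρ0mom : ∀ h : (Fin d₁ → ℝ) × (Fin d₂ → ℝ) → ℝ, Measurable h → (∃ C, ∀ x, |h x| ≤ C) →
      ∫ ω, T1 ω * T2 ω * h (S1 ω, S2 ω) ∂P = ∫ ω, T1 ω * ρ0 (S1 ω, S2 ω) * h (S1 ω, S2 ω) ∂P)
    (hν0mom : ∀ h : (Fin d₁ → ℝ) × (Fin d₂ → ℝ) → ℝ, Measurable h → (∃ C, ∀ x, |h x| ≤ C) →
      ∫ ω, T1 ω * T2 ω * Y11 ω * h (S1 ω, S2 ω) ∂P
        = ∫ ω, T1 ω * T2 ω * ν0 (S1 ω, S2 ω) * h (S1 ω, S2 ω) ∂P)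
    (hμ0mom : ∀ h : (Fin d₁ → ℝ) → ℝ, Measurable h → (∃ C, ∀ x, |h x| ≤ C) →
      ∫ ω, T1 ω * Y11 ω * h (S1 ω) ∂P = ∫ ω, T1 ω * μ0 (S1 ω) * h (S1 ω) ∂P)
    (hpos : ∀ᵐ ω ∂P, 1 / M ≤ π0 (S1 ω) ∧ 1 / M ≤ ρ0 (S1 ω, S2 ω))
    (hign1 : CondIndepFun (MeasurableSpace.comap S1 inferInstance) hS1.comap_le Y11 T1 P)
    (hign2 : CondIndepFun
      (MeasurableSpace.comap (fun ω => (S1 ω, S2 ω)) inferInstance)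
      (Measurable.comap_le (hS1.prodMk hS2))
      Y11 T2 (P[|{ω | T1 ω = 1}])) :
    ∀ h : (Fin d₁ → ℝ) → ℝ, Measurable h → (∃ C, ∀ x, |h x| ≤ C) →
      ∫ ω, T1 ω * (ν0 (S1 ω, S2 ω)
          + T2 ω * (Y11 ω - ν0 (S1 ω, S2 ω)) / ρ0 (S1 ω, S2 ω)) * h (S1 ω) ∂P
        = ∫ ω, T1 ω * μ0 (S1 ω) * h (S1 ω) ∂P :=
  dte_pseudo_outcome_identification_general P d₁ d₂ S1 hS1 S2 hS2 T1 T2 hT1 hT2 hT1_01 hT2_01 Y11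
    hY11m hY11b M hM π0 ρ0 ν0 μ0 hρ0m hν0m hρ0b hν0b hρ0mom hμ0mom hpos hign2
end
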